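/- arXiv:2110.05214 — 7 statements merged into one kernel-verified Lean document; each statement's English description precedes it below -/
import Mathlib

section
/- (Companion-array orthogonality.) Let M ≥ 1 and let w_A, w_B : {0,…,M−1} → ℂ be arbitrary sequences. Define the companion sequences w_CA(m) = −conj(w_B(M−1−m)) and w_CB(m) = conj(w_A(M−1−m)) for m ∈ {0,…,M−1}. Then for every ψ ∈ ℝ, conj(F_{w_A}(ψ))·F_{w_CA}(ψ) + conj(F_{w_B}(ψ))·F_{w_CB}(ψ) = 0; that is, the radiated fields of the protoarray and its companion array are orthogonal at every observation angle. -/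
/-- The array factor of a length-`M` sequence `u` at spatial frequency `ψ`:
`F_u(ψ) = Σ_{m=0}^{M-1} u(m) · exp(i·m·ψ)`. -/
noncomputable def arrayFactor (M : ℕ) (u : ℕ → ℂ) (ψ : ℝ) : ℂ :=
  ∑ m ∈ Finset.range M, u m * Complex.exp (Complex.I * (m : ℂ) * (ψ : ℂ))

/-- The aperiodic autocorrelation of a length-`M` sequence `u` at shift `τ`:
`R_u(τ) = Σ_{m=0}^{M-1-τ} u(m) · conj(u(m+τ))`. -/
noncomputable def aacf (M : ℕ) (u : ℕ → ℂ) (τ : ℕ) : ℂ :=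
  ∑ m ∈ Finset.range (M - τ), u m * (starRingEnd ℂ) (u (m + τ))

lemma flip_factor (M : ℕ) (hM : 1 ≤ M) (u : ℕ → ℂ) (ψ : ℝ) :
    arrayFactor M (fun m => (starRingEnd ℂ) (u (M - 1 - m))) ψ =
      Complex.exp (Complex.I * ((M - 1 : ℕ) : ℂ) * ψ) *
        (starRingEnd ℂ) (arrayFactor M u ψ) := by
  unfold arrayFactor
  rw [map_sum, Finset.mul_sum,
    ← Finset.sum_range_reflect (fun m => (starRingEnd ℂ) (u (M - 1 - m)) *
      Complex.exp (Complex.I * (m : ℂ) * ψ)) M]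
  refine Finset.sum_congr rfl fun j hj => ?_
  simp only [Finset.mem_range] at hj
  have h1 : M - 1 - (M - 1 - j) = j := by omega
  have h2 : ((M - 1 - j : ℕ) : ℂ) = ((M - 1 : ℕ) : ℂ) - (j : ℂ) :=
    Nat.cast_sub (by omega)
  have h3 : (starRingEnd ℂ) (Complex.I * (j : ℂ) * (ψ : ℂ)) = -(Complex.I * j * ψ) := by
    rw [map_mul, map_mul, Complex.conj_I, Complex.conj_ofReal, map_natCast]; ring
  rw [h1, h2, map_mul, ← Complex.exp_conj, h3,
    show Complex.I * (((M-1:ℕ):ℂ) - (j:ℂ)) * (ψ:ℂ) =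
      Complex.I * ((M-1:ℕ):ℂ) * ψ + -(Complex.I * j * ψ) from by ring,
    Complex.exp_add]
  ring

/-- Companion-array orthogonality: the radiated fields of the protoarray
`(w_A, w_B)` and its companion `(−conj∘flip w_B, conj∘flip w_A)` are orthogonal
at every observation angle. -/
theorem companion_array_orthogonality (M : ℕ) (hM : 1 ≤ M) (wA wB : ℕ → ℂ) (ψ : ℝ) :
    (starRingEnd ℂ) (arrayFactor M wA ψ) *
        arrayFactor M (fun m => -(starRingEnd ℂ) (wB (M - 1 - m))) ψ +
      (starRingEnd ℂ) (arrayFactor M wB ψ) *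
        arrayFactor M (fun m => (starRingEnd ℂ) (wA (M - 1 - m))) ψ = 0 := by
  have hneg : arrayFactor M (fun m => -(starRingEnd ℂ) (wB (M - 1 - m))) ψ =
      -arrayFactor M (fun m => (starRingEnd ℂ) (wB (M - 1 - m))) ψ := by
    unfold arrayFactor; rw [← Finset.sum_neg_distrib]; exact Finset.sum_congr rfl fun _ _ => by ring
  rw [hneg, flip_factor M hM wA ψ, flip_factor M hM wB ψ]
  ring
end

section
/- (Array-size-invariant doubling.) Let M ≥ 1 and let w_PA, w_PB : {0,…,M−1} → ℂ be arbitrary sequences. Define sequences w_A, w_B of length 2M by w_A(m) = −conj(w_PB(M−1−m)) and w_B(m) = conj(w_PA(M−1−m)) for 0 ≤ m ≤ M−1, and w_A(M+m) = w_PA(m), w_B(M+m) = w_PB(m) for 0 ≤ m ≤ M−1. Then for every ψ ∈ ℝ, |F_{w_A}(ψ)|² + |F_{w_B}(ψ)|² = 2·( |F_{w_PA}(ψ)|² + |F_{w_PB}(ψ)|² ); i.e. the doubled array preserves the shape of the protoarray's sum power pattern. -/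
open Complex ComplexConjugate

theorem norm_sq_sub_add_norm_sq_add_of_norm_eq_one {e₁ e₂ : ℂ} (he₁ : ‖e₁‖ = 1)
    (he₂ : ‖e₂‖ = 1) (a b : ℂ) :
    ‖e₂ * a - e₁ * conj b‖ ^ 2 + ‖e₂ * b + e₁ * conj a‖ ^ 2 = 2 * (‖a‖ ^ 2 + ‖b‖ ^ 2) := by
  have he₁' : e₁ * conj e₁ = 1 := by rw [mul_conj', he₁]; norm_num
  have he₂' : e₂ * conj e₂ = 1 := by rw [mul_conj', he₂]; norm_num
  apply ofReal_injective
  push_cast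
  simp only [← mul_conj', map_sub, map_add, map_mul, conj_conj]
  linear_combination (a * conj a + b * conj b) * (he₁' + he₂')

theorem norm_exp_I_mul_ofReal_mul (x ψ : ℝ) : ‖exp (I * x * ψ)‖ = 1 := by
  rw [mul_assoc, ← ofReal_mul]
  exact norm_exp_I_mul_ofReal _

namespace arrayFactor

theorem congr {M : ℕ} {u v : ℕ → ℂ} (h : ∀ m < M, u m = v m) (ψ : ℝ) :
    arrayFactor M u ψ = arrayFactor M v ψ :=
  Finset.sum_congr rfl fun m hm => by rw [h m (Finset.mem_range.mp hm)]

theorem neg (M : ℕ) (u : ℕ → ℂ) (ψ : ℝ) :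
    arrayFactor M (fun m => -u m) ψ = -arrayFactor M u ψ := by
  simp only [arrayFactor, neg_mul, Finset.sum_neg_distrib]

theorem add (M N : ℕ) (u : ℕ → ℂ) (ψ : ℝ) :
    arrayFactor (M + N) u ψ =
      arrayFactor M u ψ + exp (I * M * ψ) * arrayFactor N (fun m => u (M + m)) ψ := by
  rw [arrayFactor, Finset.sum_range_add, arrayFactor, arrayFactor, Finset.mul_sum]
  congr 1
  refine Finset.sum_congr rfl fun m _ => ?_
  rw [mul_left_comm, ← exp_add]
  push_cast
  ring_nf

theorem conj_reverse (M : ℕ) (q : ℕ → ℂ) (ψ : ℝ) :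
    arrayFactor M (fun m => conj (q (M - 1 - m))) ψ =
      exp (I * ((M : ℂ) - 1) * ψ) * conj (arrayFactor M q ψ) := by
  rw [arrayFactor, arrayFactor, map_sum, Finset.mul_sum,
    ← Finset.sum_range_reflect (fun j => exp (I * ((M : ℂ) - 1) * ψ) *
      conj (q j * exp (I * j * ψ))) M]
  refine Finset.sum_congr rfl fun m hm => ?_
  have hcast : ((M - 1 - m : ℕ) : ℂ) = (M : ℂ) - 1 - m := by
    rw [Nat.sub_sub, Nat.cast_sub (by simpa [Nat.add_comm] using hm)]
    push_cast
    ring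
  have hphase : exp (I * ((M : ℂ) - 1) * ψ) * exp (-I * ((M - 1 - m : ℕ) : ℂ) * ψ) =
      exp (I * m * ψ) := by
    rw [← exp_add, hcast]
    ring_nf
  simp only [map_mul, ← exp_conj, conj_I, conj_natCast, conj_ofReal]
  linear_combination conj (q (M - 1 - m)) * hphase.symm

end arrayFactor

theorem asi_doubling_general (M : ℕ) (wPA wPB wA wB : ℕ → ℂ)
    (hA1 : ∀ m < M, wA m = -(starRingEnd ℂ) (wPB (M - 1 - m)))
    (hB1 : ∀ m < M, wB m = (starRingEnd ℂ) (wPA (M - 1 - m)))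
    (hA2 : ∀ m < M, wA (M + m) = wPA m)
    (hB2 : ∀ m < M, wB (M + m) = wPB m)
    (ψ : ℝ) :
    ‖arrayFactor (2 * M) wA ψ‖ ^ 2 +
        ‖arrayFactor (2 * M) wB ψ‖ ^ 2 =
      2 * (‖arrayFactor M wPA ψ‖ ^ 2 +
            ‖arrayFactor M wPB ψ‖ ^ 2) := by
  have hA : arrayFactor (2 * M) wA ψ = exp (I * M * ψ) * arrayFactor M wPA ψ -
      exp (I * ((M : ℂ) - 1) * ψ) * conj (arrayFactor M wPB ψ) := by
    rw [two_mul, arrayFactor.add, arrayFactor.congr hA1, arrayFactor.neg,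
      arrayFactor.conj_reverse, arrayFactor.congr hA2]
    ring
  have hB : arrayFactor (2 * M) wB ψ = exp (I * M * ψ) * arrayFactor M wPB ψ +
      exp (I * ((M : ℂ) - 1) * ψ) * conj (arrayFactor M wPA ψ) := by
    rw [two_mul, arrayFactor.add, arrayFactor.congr hB1, arrayFactor.conj_reverse,
      arrayFactor.congr hB2]
    ring
  rw [hA, hB]
  exact norm_sq_sub_add_norm_sq_add_of_norm_eq_one
    (by exact_mod_cast norm_exp_I_mul_ofReal_mul ((M : ℝ) - 1) ψ)
    (by exact_mod_cast norm_exp_I_mul_ofReal_mul M ψ) _ _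

/-- Array-size-invariant doubling: appending the companion array to the protoarray
doubles the sum power pattern while preserving its shape. -/
theorem asi_doubling (M : ℕ) (hM : 1 ≤ M) (wPA wPB wA wB : ℕ → ℂ)
    (hA1 : ∀ m < M, wA m = -(starRingEnd ℂ) (wPB (M - 1 - m)))
    (hB1 : ∀ m < M, wB m = (starRingEnd ℂ) (wPA (M - 1 - m)))
    (hA2 : ∀ m < M, wA (M + m) = wPA m)
    (hB2 : ∀ m < M, wB (M + m) = wPB m)
    (ψ : ℝ) :
    ‖arrayFactor (2 * M) wA ψ‖ ^ 2 +
        ‖arrayFactor (2 * M) wB ψ‖ ^ 2 =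
      2 * (‖arrayFactor M wPA ψ‖ ^ 2 +
            ‖arrayFactor M wPB ψ‖ ^ 2) :=
  asi_doubling_general M wPA wPB wA wB hA1 hB1 hA2 hB2 ψ
end

section
/- (Equation (43): product factorization of the expanded array's sum pattern.) Let N, M ≥ 1, let u, v : {0,…,N−1} → ℂ and w_PA, w_PB : {0,…,M−1} → ℂ be arbitrary sequences. Define sequences w_A, w_B of length 2NM by: for 0 ≤ l ≤ N−1 and 0 ≤ m ≤ M−1, w_A(lM+m) = u(l)·w_PA(m), w_A(NM+lM+m) = −v(l)·conj(w_PB(M−1−m)), w_B(lM+m) = u(l)·w_PB(m), w_B(NM+lM+m) = v(l)·conj(w_PA(M−1−m)). Then for every ψ ∈ ℝ, |F_{w_A}(ψ)|² + |F_{w_B}(ψ)|² = ( |F_u(M·ψ)|² + |F_v(M·ψ)|² ) · ( |F_{w_PA}(ψ)|² + |F_{w_PB}(ψ)|² ). -/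
/-!
Cut the array of length `2NM` into two halves of `N` blocks of `M` elements. On each half the
weights form a Kronecker product, so its array factor is a product of an array factor at `Mψ`
and one at `ψ`; reversing and conjugating a sequence conjugates its array factor up to a
unimodular phase `c`. With `a = F_u(Mψ)`, `b = F_v(Mψ)`, `p = F_{w_PA}(ψ)`, `q = F_{w_PB}(ψ)`
this gives `F_{w_A} = a p - c b q̄` and `F_{w_B} = a q + c b p̄`, and the cross terms of
`|F_{w_A}|² + |F_{w_B}|²` cancel as in the Alamouti code.
-/

open Complex ComplexConjugate Finset

lemma arrayFactor_congr {M : ℕ} {u v : ℕ → ℂ} (h : ∀ m < M, u m = v m) (ψ : ℝ) :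
    arrayFactor M u ψ = arrayFactor M v ψ :=
  sum_congr rfl fun m hm => by rw [h m (mem_range.1 hm)]

lemma arrayFactor_neg (M : ℕ) (u : ℕ → ℂ) (ψ : ℝ) :
    arrayFactor M (fun m => -u m) ψ = -arrayFactor M u ψ := by
  simp only [arrayFactor, neg_mul, sum_neg_distrib]

lemma arrayFactor_add (K L : ℕ) (w : ℕ → ℂ) (ψ : ℝ) :
    arrayFactor (K + L) w ψ =
      arrayFactor K w ψ + exp (I * K * ψ) * arrayFactor L (fun n => w (K + n)) ψ := by
  rw [arrayFactor, sum_range_add, arrayFactor, arrayFactor, mul_sum]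
  congr 1
  refine sum_congr rfl fun n _ => ?_
  rw [mul_left_comm, ← exp_add]
  push_cast
  ring_nf

lemma arrayFactor_mul (N M : ℕ) {w u p : ℕ → ℂ}
    (h : ∀ l < N, ∀ m < M, w (l * M + m) = u l * p m) (ψ : ℝ) :
    arrayFactor (N * M) w ψ = arrayFactor N u (M * ψ) * arrayFactor M p ψ := by
  induction N with
  | zero => simp [arrayFactor]
  | succ n ih =>
    have block : arrayFactor M (fun m => w (n * M + m)) ψ = u n * arrayFactor M p ψ := by
      rw [arrayFactor_congr (fun m hm => h n n.lt_succ_self m hm), arrayFactor, arrayFactor,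
        mul_sum]
      exact sum_congr rfl fun m _ => mul_assoc _ _ _
    have phase : exp (I * ((n * M : ℕ) : ℂ) * ψ) = exp (I * n * ((M * ψ : ℝ) : ℂ)) := by
      push_cast
      ring_nf
    rw [Nat.succ_mul, arrayFactor_add, ih (fun l hl => h l (hl.trans n.lt_succ_self)), block,
      phase]
    simp only [arrayFactor, sum_range_succ]
    ring

lemma arrayFactor_conj_reverse (M : ℕ) (q : ℕ → ℂ) (ψ : ℝ) :
    arrayFactor M (fun m => conj (q (M - 1 - m))) ψ =
      exp (I * ((M : ℂ) - 1) * ψ) * conj (arrayFactor M q ψ) := by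
  rw [arrayFactor, ← sum_range_reflect, arrayFactor, map_sum, mul_sum]
  refine sum_congr rfl fun j hj => ?_
  have hj : j < M := mem_range.1 hj
  rw [show M - 1 - (M - 1 - j) = j by omega, map_mul, ← exp_conj, mul_left_comm, ← exp_add,
    Nat.cast_sub (by omega), Nat.cast_sub (by omega)]
  simp only [map_mul, conj_I, conj_ofReal, map_natCast]
  push_cast
  ring_nf

lemma arrayFactor_two_mul_mul (N M : ℕ) {w u v p q : ℕ → ℂ}
    (h₁ : ∀ l < N, ∀ m < M, w (l * M + m) = u l * p m)
    (h₂ : ∀ l < N, ∀ m < M, w (N * M + l * M + m) = v l * conj (q (M - 1 - m))) (ψ : ℝ) :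
    arrayFactor (2 * N * M) w ψ =
      arrayFactor N u (M * ψ) * arrayFactor M p ψ +
        exp (I * ((N * M + M - 1 : ℝ) * ψ)) *
          (arrayFactor N v (M * ψ) * conj (arrayFactor M q ψ)) := by
  have h₂' : ∀ l < N, ∀ m < M, w (N * M + (l * M + m)) = v l * conj (q (M - 1 - m)) :=
    fun l hl m hm => by rw [← add_assoc, h₂ l hl m hm]
  rw [show 2 * N * M = N * M + N * M by ring, arrayFactor_add, arrayFactor_mul N M h₁,
    arrayFactor_mul N M h₂', arrayFactor_conj_reverse, mul_left_comm (arrayFactor N v _),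
    ← mul_assoc, ← mul_assoc, ← exp_add]
  push_cast
  ring_nf

lemma norm_sq_add_norm_sq_alamouti (a b p q c : ℂ) (hc : ‖c‖ = 1) :
    ‖a * p - c * (b * conj q)‖ ^ 2 + ‖a * q + c * (b * conj p)‖ ^ 2 =
      (‖a‖ ^ 2 + ‖b‖ ^ 2) * (‖p‖ ^ 2 + ‖q‖ ^ 2) := by
  have hcc : c * conj c = 1 := by rw [mul_conj', hc]; norm_num
  apply ofReal_injective
  push_cast
  simp only [← mul_conj', map_add, map_sub, map_mul, conj_conj]
  linear_combination conj b * b * (p * conj p + q * conj q) * hcc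

theorem expanded_array_product_factorization_general (N M : ℕ)
    (u v wPA wPB wA wB : ℕ → ℂ)
    (hA1 : ∀ l < N, ∀ m < M, wA (l * M + m) = u l * wPA m)
    (hA2 : ∀ l < N, ∀ m < M,
      wA (N * M + l * M + m) = -(v l * (starRingEnd ℂ) (wPB (M - 1 - m))))
    (hB1 : ∀ l < N, ∀ m < M, wB (l * M + m) = u l * wPB m)
    (hB2 : ∀ l < N, ∀ m < M,
      wB (N * M + l * M + m) = v l * (starRingEnd ℂ) (wPA (M - 1 - m)))
    (ψ : ℝ) :
    ‖arrayFactor (2 * N * M) wA ψ‖ ^ 2 +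
        ‖arrayFactor (2 * N * M) wB ψ‖ ^ 2 =
      (‖arrayFactor N u (M * ψ)‖ ^ 2 +
          ‖arrayFactor N v (M * ψ)‖ ^ 2) *
        (‖arrayFactor M wPA ψ‖ ^ 2 +
          ‖arrayFactor M wPB ψ‖ ^ 2) := by
  have hA2' : ∀ l < N, ∀ m < M, wA (N * M + l * M + m) = -v l * conj (wPB (M - 1 - m)) :=
    fun l hl m hm => by rw [hA2 l hl m hm, neg_mul]
  have hphase : ‖exp (I * ((N * M + M - 1 : ℝ) * ψ))‖ = 1 := by
    rw [mul_comm I, ← ofReal_mul, norm_exp_ofReal_mul_I]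
  rw [arrayFactor_two_mul_mul N M hA1 hA2', arrayFactor_two_mul_mul N M hB1 hB2,
    arrayFactor_neg, neg_mul, mul_neg, ← sub_eq_add_neg]
  exact norm_sq_add_norm_sq_alamouti _ _ _ _ _ hphase

/-- Equation (43): product factorization of the expanded array's sum power pattern. -/
theorem expanded_array_product_factorization (N M : ℕ) (hN : 1 ≤ N) (hM : 1 ≤ M)
    (u v wPA wPB wA wB : ℕ → ℂ)
    (hA1 : ∀ l < N, ∀ m < M, wA (l * M + m) = u l * wPA m)
    (hA2 : ∀ l < N, ∀ m < M,
      wA (N * M + l * M + m) = -(v l * (starRingEnd ℂ) (wPB (M - 1 - m))))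
    (hB1 : ∀ l < N, ∀ m < M, wB (l * M + m) = u l * wPB m)
    (hB2 : ∀ l < N, ∀ m < M,
      wB (N * M + l * M + m) = v l * (starRingEnd ℂ) (wPA (M - 1 - m)))
    (ψ : ℝ) :
    ‖arrayFactor (2 * N * M) wA ψ‖ ^ 2 +
        ‖arrayFactor (2 * N * M) wB ψ‖ ^ 2 =
      (‖arrayFactor N u (M * ψ)‖ ^ 2 +
          ‖arrayFactor N v (M * ψ)‖ ^ 2) *
        (‖arrayFactor M wPA ψ‖ ^ 2 +
          ‖arrayFactor M wPB ψ‖ ^ 2) :=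
  expanded_array_product_factorization_general N M u v wPA wPB wA wB hA1 hA2 hB1 hB2 ψ
end

section
/- (Golay-pair closure under array expansion.) Let N, M ≥ 1, let (u, v) be a Golay complementary pair of unimodular sequences of length N, and let (w_PA, w_PB) be a Golay complementary pair of unimodular sequences of length M. Define sequences w_A, w_B of length 2NM by: for 0 ≤ l ≤ N−1 and 0 ≤ m ≤ M−1, w_A(lM+m) = u(l)·w_PA(m), w_A(NM+lM+m) = −v(l)·conj(w_PB(M−1−m)), w_B(lM+m) = u(l)·w_PB(m), w_B(NM+lM+m) = v(l)·conj(w_PA(M−1−m)). Then (w_A, w_B) is itself a Golay complementary pair of unimodular sequences of length 2NM. -/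
/-!
Encode a length-`n` sequence `a` by `A = ∑ a m X^m` and its conjugate reverse
`Ã = X^(n-1) · Ā(1/X)`. The coefficient of `X^(n-1-τ)` in `A Ã` is `R_a(τ)`, so a unimodular
pair `(a, b)` is Golay exactly when `A Ã + B B̃ = 2n X^(n-1)`. The expanded sequences have
`W_A = U(X^M) P_A - X^(NM) V(X^M) P̃_B` and `W_B = U(X^M) P_B + X^(NM) V(X^M) P̃_A`, and in
`W_A W̃_A + W_B W̃_B` the cross terms cancel, leaving
`X^(NM) (P_A P̃_A + P_B P̃_B) (U Ũ + V Ṽ)(X^M) = 4NM X^(2NM-1)`.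
-/

open Finset Polynomial ComplexConjugate

lemma mul_sub_one_sub_mul_add {N M l m : ℕ} (hl : l < N) (hm : m < M) :
    N * M - 1 - (l * M + m) = (N - 1 - l) * M + (M - 1 - m) := by
  obtain ⟨p, rfl⟩ := Nat.exists_eq_add_of_lt hl
  rw [show l + p + 1 - 1 - l = p by omega, show (l + p + 1) * M = l * M + p * M + M by ring]
  omega

section SeqPoly

variable {R : Type*} [CommSemiring R]

noncomputable def seqPoly (n : ℕ) (a : ℕ → R) : R[X] :=
  ∑ m ∈ range n, C (a m) * X ^ m

lemma coeff_seqPoly (n : ℕ) (a : ℕ → R) (k : ℕ) :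
    (seqPoly n a).coeff k = if k < n then a k else 0 := by
  simp [seqPoly, coeff_C_mul, coeff_X_pow]

lemma coeff_seqPoly_mul (n : ℕ) (a : ℕ → R) (p : R[X]) (k : ℕ) :
    (seqPoly n a * p).coeff k = ∑ m ∈ range n, if m ≤ k then a m * p.coeff (k - m) else 0 := by
  simp only [seqPoly, Finset.sum_mul, finsetSum_coeff, mul_assoc, coeff_C_mul, coeff_X_pow_mul',
    mul_ite, mul_zero]

lemma seqPoly_congr {n : ℕ} {a b : ℕ → R} (h : ∀ m < n, a m = b m) :
    seqPoly n a = seqPoly n b :=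
  Finset.sum_congr rfl fun m hm => by rw [h m (mem_range.1 hm)]

lemma seqPoly_append (L L' : ℕ) (w : ℕ → R) :
    seqPoly (L + L') w = seqPoly L w + X ^ L * seqPoly L' (fun i => w (L + i)) := by
  simp only [seqPoly, sum_range_add, Finset.mul_sum, pow_add]
  congr 1
  exact Finset.sum_congr rfl fun _ _ => by ring

lemma seqPoly_const_mul (n : ℕ) (c : R) (b : ℕ → R) :
    seqPoly n (fun m => c * b m) = C c * seqPoly n b := by
  simp only [seqPoly, Finset.mul_sum, C_mul, mul_assoc]

lemma seqPoly_kronecker {N M : ℕ} {w a b : ℕ → R}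
    (h : ∀ l < N, ∀ m < M, w (l * M + m) = a l * b m) :
    seqPoly (N * M) w = expand R M (seqPoly N a) * seqPoly M b := by
  induction N with
  | zero => simp [seqPoly]
  | succ N ih =>
    have hsucc : seqPoly (N + 1) a = seqPoly N a + C (a N) * X ^ N := sum_range_succ _ _
    rw [add_one_mul, seqPoly_append, ih fun l hl => h l (by omega),
      seqPoly_congr fun m hm => h N (by omega) m hm, seqPoly_const_mul, hsucc, map_add, map_mul,
      expand_C, map_pow, expand_X, ← pow_mul, mul_comm M N]
    ring

variable [StarRing R]

def conjRev (n : ℕ) (a : ℕ → R) (m : ℕ) : R :=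
  conj (a (n - 1 - m))

lemma seqPoly_conjRev_conjRev (n : ℕ) (a : ℕ → R) :
    seqPoly n (conjRev n (conjRev n a)) = seqPoly n a :=
  seqPoly_congr fun m hm => by simp [conjRev, show n - 1 - (n - 1 - m) = m by omega]

lemma seqPoly_conjRev_append (L L' : ℕ) (w : ℕ → R) :
    seqPoly (L + L') (conjRev (L + L') w) =
      seqPoly L' (conjRev L' fun i => w (L + i)) + X ^ L' * seqPoly L (conjRev L w) := by
  rw [add_comm L L', seqPoly_append]
  congr 1
  · exact seqPoly_congr fun i hi => by simp only [conjRev]; congr 2; omega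
  · congr 1
    exact seqPoly_congr fun i hi => by simp only [conjRev]; congr 2; omega

lemma seqPoly_conjRev_kronecker {N M : ℕ} {w a b : ℕ → R}
    (h : ∀ l < N, ∀ m < M, w (l * M + m) = a l * b m) :
    seqPoly (N * M) (conjRev (N * M) w) =
      expand R M (seqPoly N (conjRev N a)) * seqPoly M (conjRev M b) :=
  seqPoly_kronecker fun l hl m hm => by
    rw [conjRev, mul_sub_one_sub_mul_add hl hm, h _ (by omega) _ (by omega), map_mul]; rfl

end SeqPoly

lemma seqPoly_neg {R : Type*} [CommRing R] (n : ℕ) (a : ℕ → R) :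
    seqPoly n (-a) = -seqPoly n a := by
  simp [seqPoly]

lemma conjRev_neg {R : Type*} [CommRing R] [StarRing R] (n : ℕ) (a : ℕ → R) :
    conjRev n (-a) = -conjRev n a := by
  ext m; simp [conjRev]

noncomputable def autocorrPoly (n : ℕ) (a : ℕ → ℂ) : ℂ[X] :=
  seqPoly n a * seqPoly n (conjRev n a)

lemma coeff_autocorrPoly_sub {n τ : ℕ} (a : ℕ → ℂ) (hτ : τ < n) :
    (autocorrPoly n a).coeff (n - 1 - τ) = aacf n a τ := by
  have hfilter : (range n).filter (· ≤ n - 1 - τ) = range (n - τ) := by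
    ext; simp only [mem_filter, mem_range]; omega
  rw [autocorrPoly, coeff_seqPoly_mul, ← sum_filter, hfilter, aacf]
  refine sum_congr rfl fun m hm => ?_
  rw [mem_range] at hm
  rw [coeff_seqPoly, if_pos (by omega), conjRev, show n - 1 - (n - 1 - τ - m) = m + τ by omega]

lemma coeff_autocorrPoly_add (n τ : ℕ) (a : ℕ → ℂ) :
    (autocorrPoly n a).coeff (n - 1 + τ) = conj (aacf n a τ) := by
  have hfilter : (range n).filter (fun m => m ≤ n - 1 + τ ∧ n - 1 + τ - m < n) = Ico τ n := by
    ext; simp only [mem_filter, mem_range, mem_Ico]; omega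
  rw [autocorrPoly, coeff_seqPoly_mul]
  simp only [coeff_seqPoly, mul_ite, mul_zero, ← ite_and]
  rw [← sum_filter, hfilter, sum_Ico_eq_sum_range, aacf, map_sum]
  refine sum_congr rfl fun i hi => ?_
  rw [mem_range] at hi
  rw [conjRev, show n - 1 - (n - 1 + τ - (τ + i)) = i by omega, map_mul, Complex.conj_conj,
    add_comm τ i, mul_comm]

lemma aacf_eq_zero_of_le {n τ : ℕ} (a : ℕ → ℂ) (h : n ≤ τ) : aacf n a τ = 0 := by
  simp [aacf, Nat.sub_eq_zero_of_le h]

lemma aacf_zero {n : ℕ} {a : ℕ → ℂ} (ha : ∀ m < n, ‖a m‖ = 1) : aacf n a 0 = n := by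
  calc aacf n a 0 = ∑ _m ∈ range n, (1 : ℂ) := by
        refine sum_congr (by rw [Nat.sub_zero]) fun m hm => ?_
        rw [add_zero, Complex.mul_conj, Complex.normSq_eq_norm_sq, ha m (mem_range.1 hm)]
        norm_num
    _ = n := by simp

theorem autocorrPoly_add_of_golay {n : ℕ} {a b : ℕ → ℂ} (ha : ∀ m < n, ‖a m‖ = 1)
    (hb : ∀ m < n, ‖b m‖ = 1) (hab : ∀ τ, 1 ≤ τ → τ < n → aacf n a τ + aacf n b τ = 0) :
    autocorrPoly n a + autocorrPoly n b = C (2 * n : ℂ) * X ^ (n - 1) := by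
  ext k
  rw [coeff_add, coeff_C_mul_X_pow]
  rcases lt_or_ge k (n - 1) with hk | hk
  · rw [if_neg hk.ne, show k = n - 1 - (n - 1 - k) by omega, coeff_autocorrPoly_sub a (by omega),
      coeff_autocorrPoly_sub b (by omega), hab _ (by omega) (by omega)]
  obtain ⟨τ, rfl⟩ := Nat.exists_eq_add_of_le hk
  rw [coeff_autocorrPoly_add, coeff_autocorrPoly_add, ← map_add]
  rcases Nat.eq_zero_or_pos τ with rfl | hτ
  · rw [aacf_zero ha, aacf_zero hb, add_zero, if_pos rfl, map_add, Complex.conj_natCast]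
    ring
  rw [if_neg (by omega)]
  rcases lt_or_ge τ n with hτn | hτn
  · rw [hab τ hτ hτn, map_zero]
  · rw [aacf_eq_zero_of_le a hτn, aacf_eq_zero_of_le b hτn, add_zero, map_zero]

theorem aacf_add_eq_zero_of_autocorrPoly_add {n d : ℕ} {a b : ℕ → ℂ} {c : ℂ}
    (h : autocorrPoly n a + autocorrPoly n b = C c * X ^ d) (hd : n - 1 ≤ d) {τ : ℕ}
    (hτ : 1 ≤ τ) (hτn : τ < n) : aacf n a τ + aacf n b τ = 0 := by
  rw [← coeff_autocorrPoly_sub a hτn, ← coeff_autocorrPoly_sub b hτn, ← coeff_add, h,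
    coeff_C_mul_X_pow, if_neg (by omega)]

theorem autocorrPoly_add_expansion {N M : ℕ} {u v wPA wPB wA wB : ℕ → ℂ}
    (hA1 : ∀ l < N, ∀ m < M, wA (l * M + m) = u l * wPA m)
    (hA2 : ∀ l < N, ∀ m < M, wA (N * M + l * M + m) = -(v l * conj (wPB (M - 1 - m))))
    (hB1 : ∀ l < N, ∀ m < M, wB (l * M + m) = u l * wPB m)
    (hB2 : ∀ l < N, ∀ m < M, wB (N * M + l * M + m) = v l * conj (wPA (M - 1 - m))) :
    autocorrPoly (2 * N * M) wA + autocorrPoly (2 * N * M) wB =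
      X ^ (N * M) * (autocorrPoly M wPA + autocorrPoly M wPB) *
        expand ℂ M (autocorrPoly N u + autocorrPoly N v) := by
  have hA2' : ∀ l < N, ∀ m < M, wA (N * M + (l * M + m)) = (-v) l * conjRev M wPB m :=
    fun l hl m hm => by rw [← add_assoc, hA2 l hl m hm, Pi.neg_apply, neg_mul, conjRev]
  have hB2' : ∀ l < N, ∀ m < M, wB (N * M + (l * M + m)) = v l * conjRev M wPA m :=
    fun l hl m hm => by rw [← add_assoc, hB2 l hl m hm, conjRev]
  rw [show 2 * N * M = N * M + N * M by ring, autocorrPoly, autocorrPoly, seqPoly_conjRev_append,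
    seqPoly_conjRev_append, seqPoly_append, seqPoly_append, seqPoly_kronecker hA1,
    seqPoly_kronecker hB1, seqPoly_kronecker (w := fun i => wA (N * M + i)) hA2',
    seqPoly_kronecker (w := fun i => wB (N * M + i)) hB2', seqPoly_conjRev_kronecker hA1,
    seqPoly_conjRev_kronecker hB1, seqPoly_conjRev_kronecker (w := fun i => wA (N * M + i)) hA2',
    seqPoly_conjRev_kronecker (w := fun i => wB (N * M + i)) hB2', seqPoly_neg, conjRev_neg,
    seqPoly_neg, seqPoly_conjRev_conjRev, seqPoly_conjRev_conjRev]
  simp only [autocorrPoly, map_add, map_mul, map_neg]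
  ring

lemma forall_lt_mul_of_forall {N M : ℕ} {P : ℕ → Prop} (h : ∀ l < N, ∀ m < M, P (l * M + m)) :
    ∀ i < N * M, P i := by
  intro i hi
  have hM : 0 < M := Nat.pos_of_ne_zero (by rintro rfl; simp at hi)
  rw [← Nat.div_add_mod' i M]
  exact h _ ((Nat.div_lt_iff_lt_mul hM).2 hi) _ (Nat.mod_lt _ hM)

theorem norm_expansion_eq_one {N M : ℕ} {u v wPA wPB wA wB : ℕ → ℂ}
    (hu : ∀ l < N, ‖u l‖ = 1) (hv : ∀ l < N, ‖v l‖ = 1)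
    (hwPA : ∀ m < M, ‖wPA m‖ = 1) (hwPB : ∀ m < M, ‖wPB m‖ = 1)
    (hA1 : ∀ l < N, ∀ m < M, wA (l * M + m) = u l * wPA m)
    (hA2 : ∀ l < N, ∀ m < M, wA (N * M + l * M + m) = -(v l * conj (wPB (M - 1 - m))))
    (hB1 : ∀ l < N, ∀ m < M, wB (l * M + m) = u l * wPB m)
    (hB2 : ∀ l < N, ∀ m < M, wB (N * M + l * M + m) = v l * conj (wPA (M - 1 - m))) :
    ∀ i < 2 * N * M, ‖wA i‖ = 1 ∧ ‖wB i‖ = 1 := by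
  have hfirst : ∀ i < N * M, ‖wA i‖ = 1 ∧ ‖wB i‖ = 1 := forall_lt_mul_of_forall fun l hl m hm => by
    rw [hA1 l hl m hm, hB1 l hl m hm, norm_mul, norm_mul, hu l hl, hwPA m hm, hwPB m hm, one_mul]
    exact ⟨rfl, rfl⟩
  have hsecond : ∀ i < N * M, ‖wA (N * M + i)‖ = 1 ∧ ‖wB (N * M + i)‖ = 1 :=
    forall_lt_mul_of_forall fun l hl m hm => by
      rw [← add_assoc, hA2 l hl m hm, hB2 l hl m hm, norm_neg, norm_mul, norm_mul,
        Complex.norm_conj, Complex.norm_conj, hv l hl, hwPA _ (by omega), hwPB _ (by omega),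
        one_mul]
      exact ⟨rfl, rfl⟩
  intro i hi
  rcases lt_or_ge i (N * M) with h | h
  · exact hfirst i h
  · obtain ⟨j, rfl⟩ := Nat.exists_eq_add_of_le h
    exact hsecond j (by linarith)

theorem golay_pair_closure_expansion_general (N M : ℕ)
    (u v wPA wPB wA wB : ℕ → ℂ)
    (hu : ∀ l < N, ‖u l‖ = 1) (hv : ∀ l < N, ‖v l‖ = 1)
    (hGolayuv : ∀ τ, 1 ≤ τ → τ < N → aacf N u τ + aacf N v τ = 0)
    (hwPA : ∀ m < M, ‖wPA m‖ = 1)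
    (hwPB : ∀ m < M, ‖wPB m‖ = 1)
    (hGolayP : ∀ τ, 1 ≤ τ → τ < M → aacf M wPA τ + aacf M wPB τ = 0)
    (hA1 : ∀ l < N, ∀ m < M, wA (l * M + m) = u l * wPA m)
    (hA2 : ∀ l < N, ∀ m < M,
      wA (N * M + l * M + m) = -(v l * (starRingEnd ℂ) (wPB (M - 1 - m))))
    (hB1 : ∀ l < N, ∀ m < M, wB (l * M + m) = u l * wPB m)
    (hB2 : ∀ l < N, ∀ m < M,
      wB (N * M + l * M + m) = v l * (starRingEnd ℂ) (wPA (M - 1 - m))) :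
    (∀ m < 2 * N * M, ‖wA m‖ = 1 ∧ ‖wB m‖ = 1) ∧
      (∀ τ, 1 ≤ τ → τ < 2 * N * M →
        aacf (2 * N * M) wA τ + aacf (2 * N * M) wB τ = 0) := by
  refine ⟨norm_expansion_eq_one hu hv hwPA hwPB hA1 hA2 hB1 hB2, fun τ hτ hτn => ?_⟩
  have hd : 2 * N * M - 1 ≤ N * M + (M - 1) + M * (N - 1) := by
    rw [Nat.mul_sub_one, mul_comm M N, show 2 * N * M = N * M + N * M by ring]
    omega
  refine aacf_add_eq_zero_of_autocorrPoly_add (c := 4 * N * M) ?_ hd hτ hτn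
  rw [autocorrPoly_add_expansion hA1 hA2 hB1 hB2, autocorrPoly_add_of_golay hwPA hwPB hGolayP,
    autocorrPoly_add_of_golay hu hv hGolayuv]
  simp only [map_mul, map_pow, expand_X, ← pow_mul, pow_add, map_ofNat, map_natCast]
  ring

/-- Golay-pair closure under array expansion: expanding a Golay complementary pair
of protoarray weights by a Golay complementary pair of expanders yields again a
Golay complementary pair of unimodular sequences, of length `2NM`. -/
theorem golay_pair_closure_expansion (N M : ℕ) (hN : 1 ≤ N) (hM : 1 ≤ M)
    (u v wPA wPB wA wB : ℕ → ℂ)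
    (hu : ∀ l < N, ‖u l‖ = 1) (hv : ∀ l < N, ‖v l‖ = 1)
    (hGolayuv : ∀ τ, 1 ≤ τ → τ < N → aacf N u τ + aacf N v τ = 0)
    (hwPA : ∀ m < M, ‖wPA m‖ = 1)
    (hwPB : ∀ m < M, ‖wPB m‖ = 1)
    (hGolayP : ∀ τ, 1 ≤ τ → τ < M → aacf M wPA τ + aacf M wPB τ = 0)
    (hA1 : ∀ l < N, ∀ m < M, wA (l * M + m) = u l * wPA m)
    (hA2 : ∀ l < N, ∀ m < M,
      wA (N * M + l * M + m) = -(v l * (starRingEnd ℂ) (wPB (M - 1 - m))))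
    (hB1 : ∀ l < N, ∀ m < M, wB (l * M + m) = u l * wPB m)
    (hB2 : ∀ l < N, ∀ m < M,
      wB (N * M + l * M + m) = v l * (starRingEnd ℂ) (wPA (M - 1 - m))) :
    (∀ m < 2 * N * M, ‖wA m‖ = 1 ∧ ‖wB m‖ = 1) ∧
      (∀ τ, 1 ≤ τ → τ < 2 * N * M →
        aacf (2 * N * M) wA τ + aacf (2 * N * M) wB τ = 0) :=
  golay_pair_closure_expansion_general N M u v wPA wPB wA wB hu hv hGolayuv hwPA hwPB hGolayP hA1
    hA2 hB1 hB2
end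

section
/- (Ripple bound for ε-complementary pairs.) Let M ≥ 1, ε ≥ 0, and let u, v be unimodular sequences of length M forming an ε-complementary pair, i.e. |R_u(τ) + R_v(τ)| ≤ ε for every τ ∈ {1,…,M−1}. Then for every ψ ∈ ℝ, the sum power-domain array factor deviates from flat by at most 2(M−1)ε: | |F_u(ψ)|² + |F_v(ψ)|² − 2M | ≤ 2(M−1)ε. -/
/-! The power pattern is the Fourier series of the autocorrelation. For any finite sequence,
`‖Σ w‖² = Σ ‖w m‖² + 2 Re Σ_{τ ≥ 1} R_w(τ)`, and modulating `u` by `e^{imψ}` turns `Σ u` into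
`F_u(ψ)` and multiplies `R_u(τ)` by `e^{-iτψ}`. For unimodular sequences the zero-shift term is `M`,
so `|F_u|² + |F_v|² - 2M = 2 Re Σ_{τ=1}^{M-1} (R_u(τ) + R_v(τ)) e^{-iτψ}`, a sum of `M - 1` terms of
modulus at most `ε`. -/

open Finset Complex ComplexConjugate

section Autocorrelation

variable (w : ℕ → ℂ)

lemma aacf_self (M : ℕ) : aacf M w M = 0 := by
  simp [aacf]

lemma aacf_succ {M τ : ℕ} (h : τ ≤ M) :
    aacf (M + 1) w τ = aacf M w τ + w (M - τ) * conj (w M) := by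
  rw [aacf, aacf, Nat.sub_add_comm h, sum_range_succ, Nat.sub_add_cancel h]

lemma sum_aacf_succ (M : ℕ) :
    ∑ τ ∈ Ico 1 (M + 1), aacf (M + 1) w τ
      = ∑ τ ∈ Ico 1 M, aacf M w τ + (∑ m ∈ range M, w m) * conj (w M) := by
  have h_top : ∑ τ ∈ Ico 1 (M + 1), aacf M w τ = ∑ τ ∈ Ico 1 M, aacf M w τ := by
    refine (sum_subset (Ico_subset_Ico_right M.le_succ) fun τ hτ hτ' => ?_).symm
    obtain rfl : τ = M := by simp only [mem_Ico] at hτ hτ'; omega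
    exact aacf_self w τ
  have h_reflect : ∑ τ ∈ Ico 1 (M + 1), w (M - τ) = ∑ m ∈ range M, w m := by
    rw [sum_Ico_eq_sum_range, Nat.add_sub_cancel]
    simp_rw [← Nat.sub_sub]
    exact sum_range_reflect w M
  calc ∑ τ ∈ Ico 1 (M + 1), aacf (M + 1) w τ
      = ∑ τ ∈ Ico 1 (M + 1), (aacf M w τ + w (M - τ) * conj (w M)) :=
        sum_congr rfl fun τ hτ => aacf_succ w (by simp only [mem_Ico] at hτ; omega)
    _ = _ := by rw [sum_add_distrib, ← sum_mul, h_top, h_reflect]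

theorem norm_sq_sum_range_eq_aacf (M : ℕ) :
    ‖∑ m ∈ range M, w m‖ ^ 2
      = ∑ m ∈ range M, ‖w m‖ ^ 2 + 2 * (∑ τ ∈ Ico 1 M, aacf M w τ).re := by
  induction M with
  | zero => simp
  | succ M ih =>
    rw [sum_range_succ, sum_range_succ, sum_aacf_succ, ← normSq_eq_norm_sq, normSq_add,
      normSq_eq_norm_sq, normSq_eq_norm_sq, add_re, ih]
    ring

end Autocorrelation

noncomputable def modulate (u : ℕ → ℂ) (ψ : ℝ) (m : ℕ) : ℂ :=
  u m * exp (I * m * ψ)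

lemma arrayFactor_eq_sum_modulate (M : ℕ) (u : ℕ → ℂ) (ψ : ℝ) :
    arrayFactor M u ψ = ∑ m ∈ range M, modulate u ψ m := rfl

lemma norm_modulate (u : ℕ → ℂ) (ψ : ℝ) (m : ℕ) : ‖modulate u ψ m‖ = ‖u m‖ := by
  simp [modulate, norm_exp]

lemma aacf_modulate (M : ℕ) (u : ℕ → ℂ) (ψ : ℝ) (τ : ℕ) :
    aacf M (modulate u ψ) τ = aacf M u τ * exp (-(I * τ * ψ)) := by
  rw [aacf, aacf, sum_mul]
  refine sum_congr rfl fun m _ => ?_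
  rw [modulate, modulate, map_mul, ← exp_conj, mul_mul_mul_comm, ← exp_add]
  congr 2
  simp only [map_mul, conj_I, conj_natCast, conj_ofReal]
  push_cast
  ring

theorem norm_sq_arrayFactor {M : ℕ} {u : ℕ → ℂ} (hu : ∀ m < M, ‖u m‖ = 1) (ψ : ℝ) :
    ‖arrayFactor M u ψ‖ ^ 2
      = M + 2 * (∑ τ ∈ Ico 1 M, aacf M u τ * exp (-(I * τ * ψ))).re := by
  have h_diag : ∑ m ∈ range M, ‖modulate u ψ m‖ ^ 2 = M := by
    rw [sum_congr rfl fun m hm => by rw [norm_modulate, hu m (mem_range.mp hm), one_pow]]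
    simp
  simp only [arrayFactor_eq_sum_modulate, norm_sq_sum_range_eq_aacf, h_diag, aacf_modulate]

theorem eps_complementary_ripple_bound_general (M : ℕ) (hM : 1 ≤ M) (ε : ℝ)
    (u v : ℕ → ℂ)
    (hu : ∀ m < M, ‖u m‖ = 1) (hv : ∀ m < M, ‖v m‖ = 1)
    (heps : ∀ τ, 1 ≤ τ → τ < M → ‖aacf M u τ + aacf M v τ‖ ≤ ε)
    (ψ : ℝ) :
    |‖arrayFactor M u ψ‖ ^ 2 + ‖arrayFactor M v ψ‖ ^ 2
        - 2 * M| ≤ 2 * ((M : ℝ) - 1) * ε := by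
  set S := ∑ τ ∈ Ico 1 M, (aacf M u τ + aacf M v τ) * exp (-(I * τ * ψ))
  have h_excess : ‖arrayFactor M u ψ‖ ^ 2 + ‖arrayFactor M v ψ‖ ^ 2 - 2 * M = 2 * S.re := by
    simp only [S, norm_sq_arrayFactor hu, norm_sq_arrayFactor hv, add_mul, sum_add_distrib,
      add_re]
    ring
  have h_terms : ∀ τ ∈ Ico 1 M, ‖(aacf M u τ + aacf M v τ) * exp (-(I * τ * ψ))‖ ≤ ε := by
    intro τ hτ
    simp only [mem_Ico] at hτ
    simpa [norm_exp] using heps τ hτ.1 hτ.2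
  calc |‖arrayFactor M u ψ‖ ^ 2 + ‖arrayFactor M v ψ‖ ^ 2 - 2 * M|
      = 2 * |S.re| := by rw [h_excess, abs_mul, abs_two]
    _ ≤ 2 * ∑ τ ∈ Ico 1 M, ε := by
        gcongr
        exact (abs_re_le_norm S).trans ((norm_sum_le _ _).trans (sum_le_sum h_terms))
    _ = 2 * ((M : ℝ) - 1) * ε := by
        rw [sum_const, Nat.card_Ico, nsmul_eq_mul, Nat.cast_sub hM]
        push_cast
        ring

/-- Ripple bound for `ε`-complementary pairs: the sum power-domain array factor
deviates from the flat level `2M` by at most `2(M−1)ε`. -/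
theorem eps_complementary_ripple_bound (M : ℕ) (hM : 1 ≤ M) (ε : ℝ) (hε : 0 ≤ ε)
    (u v : ℕ → ℂ)
    (hu : ∀ m < M, ‖u m‖ = 1) (hv : ∀ m < M, ‖v m‖ = 1)
    (heps : ∀ τ, 1 ≤ τ → τ < M → ‖aacf M u τ + aacf M v τ‖ ≤ ε)
    (ψ : ℝ) :
    |‖arrayFactor M u ψ‖ ^ 2 + ‖arrayFactor M v ψ‖ ^ 2
        - 2 * M| ≤ 2 * ((M : ℝ) - 1) * ε :=
  eps_complementary_ripple_bound_general M hM ε u v hu hv heps ψ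
end

section
/- (Flat two-dimensional spectrum of a Golay complementary array pair.) Let N, M ≥ 1 and let (U, V) be a Golay complementary array pair of unimodular N×M matrices. Then for all ψ_y, ψ_z ∈ ℝ, |F_U(ψ_y,ψ_z)|² + |F_V(ψ_y,ψ_z)|² = 2NM. -/
/-- The two-dimensional array factor of an `N×M` matrix `W` at `(ψ_y, ψ_z)`:
`F_W(ψ_y,ψ_z) = Σ_{n=0}^{N-1} Σ_{m=0}^{M-1} W(n,m) · exp(i·(n·ψ_z + m·ψ_y))`. -/
noncomputable def arrayFactor2 (N M : ℕ) (W : ℕ → ℕ → ℂ) (ψy ψz : ℝ) : ℂ :=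
  ∑ n ∈ Finset.range N, ∑ m ∈ Finset.range M,
    W n m * Complex.exp (Complex.I * ((n : ℂ) * (ψz : ℂ) + (m : ℂ) * (ψy : ℂ)))

/-- The two-dimensional aperiodic autocorrelation of an `N×M` matrix `W` at integer
shifts `(τ_n, τ_m)`: the sum of `W(n,m)·conj(W(n+τ_n, m+τ_m))` over all pairs
`(n,m)` with `0 ≤ n, n+τ_n ≤ N−1` and `0 ≤ m, m+τ_m ≤ M−1`. -/
noncomputable def aacf2 (N M : ℕ) (W : ℕ → ℕ → ℂ) (τn τm : ℤ) : ℂ :=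
  ∑ n ∈ Finset.range N, ∑ m ∈ Finset.range M,
    if 0 ≤ (n : ℤ) + τn ∧ (n : ℤ) + τn < (N : ℤ) ∧
        0 ≤ (m : ℤ) + τm ∧ (m : ℤ) + τm < (M : ℤ) then
      W n m * (starRingEnd ℂ) (W ((n : ℤ) + τn).toNat ((m : ℤ) + τm).toNat)
    else 0

/-- `(U, V)` is a Golay complementary array pair of `N×M` matrices: the sum of their
two-dimensional aperiodic autocorrelations vanishes at every nonzero shift. -/
def IsGolayArrayPair (N M : ℕ) (U V : ℕ → ℕ → ℂ) : Prop :=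
  ∀ τn τm : ℤ, |τn| ≤ (N : ℤ) - 1 → |τm| ≤ (M : ℤ) - 1 → ¬(τn = 0 ∧ τm = 0) →
    aacf2 N M U τn τm + aacf2 N M V τn τm = 0

/-!
Expanding `|F_W|²` as a double sum over pairs of array positions and grouping the pairs by
their difference gives the two-dimensional Wiener–Khinchin identity
`|F_W(ψ)|² = Σ_τ R_W(τ) e^{-i τ·ψ}`. Adding it for `U` and `V`, complementarity cancels every
shift `τ ≠ 0`, and unimodularity gives `R_U(0) + R_V(0) = 2NM`.
-/

open Finset Complex ComplexConjugate

section Correlation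

variable (N M : ℕ) (W : ℕ → ℕ → ℂ) (ψy ψz : ℝ)

lemma arrayFactor2_eq_sum_product :
    arrayFactor2 N M W ψy ψz =
      ∑ p ∈ range N ×ˢ range M, W p.1 p.2 * exp (I * (p.1 * ψz + p.2 * ψy)) :=
  (sum_product' _ _ _).symm

lemma sq_norm_arrayFactor2_eq_sum_pairs :
    (‖arrayFactor2 N M W ψy ψz‖ ^ 2 : ℂ) =
      ∑ x ∈ (range N ×ˢ range M) ×ˢ (range N ×ˢ range M),
        W x.1.1 x.1.2 * conj (W x.2.1 x.2.2) *
          exp (-I * ((((x.2.1 : ℤ) - x.1.1 : ℤ) : ℂ) * ψz + (((x.2.2 : ℤ) - x.1.2 : ℤ) : ℂ) * ψy)) := by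
  rw [← mul_conj', arrayFactor2_eq_sum_product, map_sum, sum_mul_sum, ← sum_product']
  refine sum_congr rfl fun x _ => ?_
  simp only [map_mul, ← exp_conj, map_add, conj_I, conj_ofReal, map_natCast]
  rw [mul_mul_mul_comm, ← exp_add]
  push_cast
  ring_nf

lemma sum_aacf2_mul_exp_eq_sum_pairs :
    ∑ τ ∈ Icc (1 - (N : ℤ)) (N - 1) ×ˢ Icc (1 - (M : ℤ)) (M - 1),
        aacf2 N M W τ.1 τ.2 * exp (-I * (τ.1 * ψz + τ.2 * ψy)) =
      ∑ x ∈ (range N ×ˢ range M) ×ˢ (range N ×ˢ range M),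
        W x.1.1 x.1.2 * conj (W x.2.1 x.2.2) *
          exp (-I * ((((x.2.1 : ℤ) - x.1.1 : ℤ) : ℂ) * ψz + (((x.2.2 : ℤ) - x.1.2 : ℤ) : ℂ) * ψy)) := by
  simp only [aacf2, ← sum_product', sum_mul, ite_mul, zero_mul]
  rw [← sum_filter]
  symm
  -- a pair of positions `(p, q)` corresponds to the shift `q - p` together with `p`
  refine sum_nbij' (fun x => (((x.2.1 : ℤ) - x.1.1, (x.2.2 : ℤ) - x.1.2), x.1))
    (fun y => (y.2, (((y.2.1 : ℤ) + y.1.1).toNat, ((y.2.2 : ℤ) + y.1.2).toNat)))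
    ?_ ?_ ?_ ?_ ?_ <;>
  simp only [mem_product, mem_range, mem_filter, mem_Icc, Prod.forall, Prod.mk.injEq,
    add_sub_cancel, Int.toNat_natCast, and_true, implies_true]
  all_goals intros; omega

lemma sq_norm_arrayFactor2_eq_sum_aacf2 :
    (‖arrayFactor2 N M W ψy ψz‖ ^ 2 : ℂ) =
      ∑ τ ∈ Icc (1 - (N : ℤ)) (N - 1) ×ˢ Icc (1 - (M : ℤ)) (M - 1),
        aacf2 N M W τ.1 τ.2 * exp (-I * (τ.1 * ψz + τ.2 * ψy)) := by
  rw [sq_norm_arrayFactor2_eq_sum_pairs, sum_aacf2_mul_exp_eq_sum_pairs]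

lemma aacf2_zero_zero_of_norm_eq_one (h : ∀ n < N, ∀ m < M, ‖W n m‖ = 1) :
    aacf2 N M W 0 0 = N * M := by
  calc aacf2 N M W 0 0 = ∑ _n ∈ range N, ∑ _m ∈ range M, (1 : ℂ) := by
        refine sum_congr rfl fun n hn => sum_congr rfl fun m hm => ?_
        rw [mem_range] at hn hm
        simp [hn, hm, mul_conj', h n hn m hm]
    _ = N * M := by simp

end Correlation

theorem golay_array_pair_flat_spectrum_general (N M : ℕ)
    (U V : ℕ → ℕ → ℂ)
    (hU : ∀ n < N, ∀ m < M, ‖U n m‖ = 1)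
    (hV : ∀ n < N, ∀ m < M, ‖V n m‖ = 1)
    (hGolay : IsGolayArrayPair N M U V) (ψy ψz : ℝ) :
    ‖arrayFactor2 N M U ψy ψz‖ ^ 2 +
        ‖arrayFactor2 N M V ψy ψz‖ ^ 2 = 2 * N * M := by
  suffices h : ((‖arrayFactor2 N M U ψy ψz‖ ^ 2 + ‖arrayFactor2 N M V ψy ψz‖ ^ 2 : ℝ) : ℂ) =
      aacf2 N M U 0 0 + aacf2 N M V 0 0 by
    rw [aacf2_zero_zero_of_norm_eq_one N M U hU, aacf2_zero_zero_of_norm_eq_one N M V hV] at h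
    apply ofReal_injective
    rw [h]
    push_cast
    ring
  push_cast
  rw [sq_norm_arrayFactor2_eq_sum_aacf2, sq_norm_arrayFactor2_eq_sum_aacf2, ← sum_add_distrib]
  simp only [← add_mul]
  rw [sum_eq_single ((0, 0) : ℤ × ℤ)]
  · simp
  · rintro ⟨τn, τm⟩ hτ hne
    simp only [mem_product, mem_Icc] at hτ
    rw [hGolay τn τm (abs_le.mpr ⟨by omega, by omega⟩) (abs_le.mpr ⟨by omega, by omega⟩)
      (by simpa using hne), zero_mul]
  · intro h0
    obtain rfl | rfl : N = 0 ∨ M = 0 := by simp only [mem_product, mem_Icc] at h0; omega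
    all_goals simp [aacf2]

/-- A Golay complementary array pair of unimodular `N×M` matrices has a spatially
flat sum two-dimensional power spectrum. -/
theorem golay_array_pair_flat_spectrum (N M : ℕ) (hN : 1 ≤ N) (hM : 1 ≤ M)
    (U V : ℕ → ℕ → ℂ)
    (hU : ∀ n < N, ∀ m < M, ‖U n m‖ = 1)
    (hV : ∀ n < N, ∀ m < M, ‖V n m‖ = 1)
    (hGolay : IsGolayArrayPair N M U V) (ψy ψz : ℝ) :
    ‖arrayFactor2 N M U ψy ψz‖ ^ 2 +
        ‖arrayFactor2 N M V ψy ψz‖ ^ 2 = 2 * N * M :=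
  golay_array_pair_flat_spectrum_general N M U V hU hV hGolay ψy ψz
end

section
/- (Proposition 4, horizontal variant: expansion of a URA by a Golay array pair.) Let L, K, N, M ≥ 1, let (U, V) be a Golay complementary array pair of unimodular L×K matrices, and let W_PA, W_PB : {0,…,N−1}×{0,…,M−1} → ℂ be arbitrary matrices. Define LN×2KM matrices W_A, W_B by: for 0 ≤ l ≤ L−1, 0 ≤ k ≤ K−1, 0 ≤ n ≤ N−1, 0 ≤ m ≤ M−1, W_A(lN+n, kM+m) = U(l,k)·W_PA(n,m), W_A(lN+n, KM+kM+m) = −V(l,k)·conj(W_PB(N−1−n, M−1−m)), W_B(lN+n, kM+m) = U(l,k)·W_PB(n,m), W_B(lN+n, KM+kM+m) = V(l,k)·conj(W_PA(N−1−n, M−1−m)). Then for all ψ_y, ψ_z ∈ ℝ, |F_{W_A}(ψ_y,ψ_z)|² + |F_{W_B}(ψ_y,ψ_z)|² = 2LK·( |F_{W_PA}(ψ_y,ψ_z)|² + |F_{W_PB}(ψ_y,ψ_z)|² ). -/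
/-!
Cutting `W_A`, `W_B` into a left and a right half, each an `L × K` array of `N × M` blocks, gives
`F_{W_A} = P A - c Q conj B` and `F_{W_B} = P B + c Q conj A`, where `P`, `Q` are the array factors
of `U`, `V` at the block frequencies `(M ψ_y, N ψ_z)`, `A`, `B` those of `W_PA`, `W_PB`, and `c` is
a unimodular phase produced by the column offset `KM` and the index reversal. The Alamouti identity
`|p a - q conj b|² + |p b + q conj a|² = (|p|² + |q|²) (|a|² + |b|²)` then reduces the claim to
`|P|² + |Q|² = 2LK`. This is the Golay property: `|F|²` is the Fourier transform of the
autocorrelation, all nonzero shifts cancel between `U` and `V`, and the zero shift of a unimodular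
`L × K` array is `LK`.
-/

open Finset Complex ComplexConjugate

theorem sum_range_mul_eq_sum_sum {β : Type*} [AddCommMonoid β] (L N : ℕ) (f : ℕ → β) :
    ∑ x ∈ range (L * N), f x = ∑ l ∈ range L, ∑ n ∈ range N, f (l * N + n) := by
  induction L with
  | zero => simp
  | succ L ih => rw [Nat.succ_mul, sum_range_add, ih, sum_range_succ]

theorem sum_Icc_ite_shift {β : Type*} [AddCommMonoid β] {N M n m : ℕ} (hn : n < N) (hm : m < M)
    (f : ℤ × ℤ → β) :
    ∑ τ ∈ Icc (1 - (N : ℤ)) (N - 1) ×ˢ Icc (1 - (M : ℤ)) (M - 1),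
        (if 0 ≤ (n : ℤ) + τ.1 ∧ (n : ℤ) + τ.1 < N ∧ 0 ≤ (m : ℤ) + τ.2 ∧ (m : ℤ) + τ.2 < M
          then f τ else 0) =
      ∑ q ∈ range N ×ˢ range M, f ((q.1 : ℤ) - n, (q.2 : ℤ) - m) := by
  rw [← sum_filter]
  refine sum_nbij' (fun τ => (((n : ℤ) + τ.1).toNat, ((m : ℤ) + τ.2).toNat))
    (fun q => ((q.1 : ℤ) - n, (q.2 : ℤ) - m)) ?_ ?_ ?_ ?_ fun τ hτ => congrArg f ?_
  any_goals
    intro x hx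
    simp only [mem_filter, mem_Icc, mem_range, mem_product, Prod.ext_iff] at hx ⊢
    omega
  simp only [mem_filter, mem_Icc, mem_product] at hτ
  ext <;> simp only <;> omega

theorem arrayFactor2_neg (N M : ℕ) (W : ℕ → ℕ → ℂ) (ψy ψz : ℝ) :
    arrayFactor2 N M (fun n m => -W n m) ψy ψz = -arrayFactor2 N M W ψy ψz := by
  simp only [arrayFactor2, neg_mul, sum_neg_distrib]

theorem arrayFactor2_add_right (N M₁ M₂ : ℕ) (W : ℕ → ℕ → ℂ) (ψy ψz : ℝ) :
    arrayFactor2 N (M₁ + M₂) W ψy ψz = arrayFactor2 N M₁ W ψy ψz +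
      exp (I * (M₁ * ψy : ℝ)) * arrayFactor2 N M₂ (fun n m => W n (M₁ + m)) ψy ψz := by
  simp only [arrayFactor2, sum_range_add, sum_add_distrib, mul_sum]
  congr 1
  refine sum_congr rfl fun n _ => sum_congr rfl fun m _ => ?_
  rw [mul_left_comm, ← exp_add]
  push_cast
  ring_nf

theorem arrayFactor2_kronecker {L K N M : ℕ} {X P W : ℕ → ℕ → ℂ}
    (h : ∀ l < L, ∀ k < K, ∀ n < N, ∀ m < M, W (l * N + n) (k * M + m) = X l k * P n m)
    (ψy ψz : ℝ) :
    arrayFactor2 (L * N) (K * M) W ψy ψz =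
      arrayFactor2 L K X (M * ψy) (N * ψz) * arrayFactor2 N M P ψy ψz := by
  rw [arrayFactor2, sum_range_mul_eq_sum_sum]
  simp only [sum_range_mul_eq_sum_sum K M]
  rw [arrayFactor2, sum_mul]
  refine sum_congr rfl fun l hl => ?_
  rw [sum_comm, sum_mul]
  refine sum_congr rfl fun k hk => ?_
  rw [arrayFactor2, mul_sum]
  refine sum_congr rfl fun n hn => ?_
  rw [mul_sum]
  refine sum_congr rfl fun m hm => ?_
  rw [mem_range] at hl hk hn hm
  rw [h l hl k hk n hn m hm, mul_mul_mul_comm, ← exp_add]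
  push_cast
  ring_nf

theorem arrayFactor2_conj_reverse (N M : ℕ) (P : ℕ → ℕ → ℂ) (ψy ψz : ℝ) :
    arrayFactor2 N M (fun n m => conj (P (N - 1 - n) (M - 1 - m))) ψy ψz =
      exp (I * (((N : ℝ) - 1) * ψz + ((M : ℝ) - 1) * ψy : ℝ)) *
        conj (arrayFactor2 N M P ψy ψz) := by
  rw [arrayFactor2, arrayFactor2, map_sum, mul_sum,
    ← sum_range_reflect (fun n => _ * conj (∑ m ∈ range M, _))]
  refine sum_congr rfl fun n hn => ?_
  rw [map_sum, mul_sum, ← sum_range_reflect]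
  refine sum_congr rfl fun m hm => ?_
  rw [mem_range] at hn hm
  rw [map_mul, ← exp_conj, mul_left_comm, ← exp_add, show M - 1 - (M - 1 - m) = m by omega]
  congr 2
  simp only [map_mul, map_add, conj_I, conj_natCast, conj_ofReal]
  push_cast [Nat.cast_sub (show 1 ≤ N by omega), Nat.cast_sub (show 1 ≤ M by omega),
    Nat.cast_sub (show n ≤ N - 1 by omega), Nat.cast_sub (show m ≤ M - 1 by omega)]
  ring

theorem arrayFactor2_mul_conj (N M : ℕ) (W : ℕ → ℕ → ℂ) (ψy ψz : ℝ) :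
    arrayFactor2 N M W ψy ψz * conj (arrayFactor2 N M W ψy ψz) =
      ∑ τ ∈ Icc (1 - (N : ℤ)) (N - 1) ×ˢ Icc (1 - (M : ℤ)) (M - 1),
        aacf2 N M W τ.1 τ.2 * exp (-(I * (τ.1 * ψz + τ.2 * ψy))) := by
  have hF : arrayFactor2 N M W ψy ψz =
      ∑ p ∈ range N ×ˢ range M, W p.1 p.2 * exp (I * (p.1 * ψz + p.2 * ψy)) := by
    rw [arrayFactor2, sum_product]
  simp only [aacf2, ← sum_product', sum_mul, ite_mul, zero_mul]
  rw [sum_product_right, hF, map_sum, sum_mul_sum]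
  refine sum_congr rfl fun p hp => ?_
  rw [mem_product, mem_range, mem_range] at hp
  rw [sum_Icc_ite_shift hp.1 hp.2]
  refine sum_congr rfl fun q hq => ?_
  rw [mem_product, mem_range, mem_range] at hq
  have h1 : ((p.1 : ℤ) + ((q.1 : ℤ) - p.1)).toNat = q.1 := by omega
  have h2 : ((p.2 : ℤ) + ((q.2 : ℤ) - p.2)).toNat = q.2 := by omega
  rw [h1, h2, map_mul, ← exp_conj, mul_mul_mul_comm, ← exp_add]
  congr 2
  simp only [map_mul, map_add, conj_I, conj_natCast, conj_ofReal]
  push_cast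
  ring

theorem aacf2_zero_zero {N M : ℕ} {W : ℕ → ℕ → ℂ} (hW : ∀ n < N, ∀ m < M, ‖W n m‖ = 1) :
    aacf2 N M W 0 0 = N * M := by
  simp only [aacf2, add_zero, Int.toNat_natCast, Nat.cast_nonneg, Nat.cast_lt, true_and]
  have hterm : ∀ n ∈ range N, ∀ m ∈ range M,
      (if n < N ∧ m < M then W n m * conj (W n m) else 0) = 1 := by
    intro n hn m hm
    rw [mem_range] at hn hm
    rw [if_pos ⟨hn, hm⟩, mul_conj', hW n hn m hm, ofReal_one, one_pow]
  rw [sum_congr rfl fun n hn => sum_congr rfl (hterm n hn)]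
  simp only [sum_const, card_range, nsmul_eq_mul, mul_one]

theorem IsGolayArrayPair.norm_sq_add_norm_sq {L K : ℕ} {U V : ℕ → ℕ → ℂ}
    (hGolay : IsGolayArrayPair L K U V) (hL : 1 ≤ L) (hK : 1 ≤ K)
    (hU : ∀ l < L, ∀ k < K, ‖U l k‖ = 1) (hV : ∀ l < L, ∀ k < K, ‖V l k‖ = 1) (ψy ψz : ℝ) :
    ‖arrayFactor2 L K U ψy ψz‖ ^ 2 + ‖arrayFactor2 L K V ψy ψz‖ ^ 2 = 2 * L * K := by
  have hzero : (0, 0) ∈ Icc (1 - (L : ℤ)) (L - 1) ×ˢ Icc (1 - (K : ℤ)) (K - 1) := by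
    simp only [mem_product, mem_Icc]
    omega
  have hoff : ∀ τ ∈ Icc (1 - (L : ℤ)) (L - 1) ×ˢ Icc (1 - (K : ℤ)) (K - 1), τ ≠ (0, 0) →
      aacf2 L K U τ.1 τ.2 * exp (-(I * (τ.1 * ψz + τ.2 * ψy))) +
        aacf2 L K V τ.1 τ.2 * exp (-(I * (τ.1 * ψz + τ.2 * ψy))) = 0 := by
    rintro ⟨τl, τk⟩ hτ hne
    simp only [mem_product, mem_Icc] at hτ
    rw [← add_mul, hGolay τl τk (abs_le.2 ⟨by omega, by omega⟩) (abs_le.2 ⟨by omega, by omega⟩)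
      (fun h => hne (Prod.ext h.1 h.2)), zero_mul]
  have hC : ((‖arrayFactor2 L K U ψy ψz‖ ^ 2 + ‖arrayFactor2 L K V ψy ψz‖ ^ 2 : ℝ) : ℂ) =
      ((2 * L * K : ℝ) : ℂ) := by
    push_cast
    rw [← mul_conj', ← mul_conj', arrayFactor2_mul_conj, arrayFactor2_mul_conj,
      ← sum_add_distrib, sum_eq_single_of_mem _ hzero hoff, aacf2_zero_zero hU,
      aacf2_zero_zero hV]
    simp only [Int.cast_zero, zero_mul, add_zero, mul_zero, neg_zero, exp_zero, mul_one]
    ring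
  exact_mod_cast hC

theorem norm_mul_sub_add_norm_mul_add (p q a b : ℂ) :
    ‖p * a - q * conj b‖ ^ 2 + ‖p * b + q * conj a‖ ^ 2 =
      (‖p‖ ^ 2 + ‖q‖ ^ 2) * (‖a‖ ^ 2 + ‖b‖ ^ 2) := by
  simp only [← normSq_eq_norm_sq, normSq_apply, mul_re, mul_im, sub_re, sub_im, add_re, add_im,
    conj_re, conj_im]
  ring

theorem ura_expansion_horizontal_general (L K N M : ℕ)
    (hL : 1 ≤ L) (hK : 1 ≤ K)
    (U V WPA WPB WA WB : ℕ → ℕ → ℂ)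
    (hU : ∀ l < L, ∀ k < K, ‖U l k‖ = 1)
    (hV : ∀ l < L, ∀ k < K, ‖V l k‖ = 1)
    (hGolay : IsGolayArrayPair L K U V)
    (hA1 : ∀ l < L, ∀ k < K, ∀ n < N, ∀ m < M,
      WA (l * N + n) (k * M + m) = U l k * WPA n m)
    (hA2 : ∀ l < L, ∀ k < K, ∀ n < N, ∀ m < M,
      WA (l * N + n) (K * M + k * M + m) =
        -(V l k * (starRingEnd ℂ) (WPB (N - 1 - n) (M - 1 - m))))
    (hB1 : ∀ l < L, ∀ k < K, ∀ n < N, ∀ m < M,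
      WB (l * N + n) (k * M + m) = U l k * WPB n m)
    (hB2 : ∀ l < L, ∀ k < K, ∀ n < N, ∀ m < M,
      WB (l * N + n) (K * M + k * M + m) =
        V l k * (starRingEnd ℂ) (WPA (N - 1 - n) (M - 1 - m)))
    (ψy ψz : ℝ) :
    ‖arrayFactor2 (L * N) (2 * K * M) WA ψy ψz‖ ^ 2 +
        ‖arrayFactor2 (L * N) (2 * K * M) WB ψy ψz‖ ^ 2 =
      2 * L * K * (‖arrayFactor2 N M WPA ψy ψz‖ ^ 2 +
                    ‖arrayFactor2 N M WPB ψy ψz‖ ^ 2) := by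
  set P := arrayFactor2 L K U (M * ψy) (N * ψz)
  set Q := arrayFactor2 L K V (M * ψy) (N * ψz)
  set A := arrayFactor2 N M WPA ψy ψz
  set B := arrayFactor2 N M WPB ψy ψz
  set c := exp (I * (((K * M : ℕ) : ℝ) * ψy : ℝ)) *
    exp (I * (((N : ℝ) - 1) * ψz + ((M : ℝ) - 1) * ψy : ℝ))
  have hc : ‖c‖ = 1 := by simp only [c, norm_mul, norm_exp_I_mul_ofReal, mul_one]
  have hA2' : ∀ l < L, ∀ k < K, ∀ n < N, ∀ m < M,
      WA (l * N + n) (K * M + (k * M + m)) = V l k * -conj (WPB (N - 1 - n) (M - 1 - m)) :=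
    fun l hl k hk n hn m hm => by rw [← add_assoc, hA2 l hl k hk n hn m hm, mul_neg]
  have hB2' : ∀ l < L, ∀ k < K, ∀ n < N, ∀ m < M,
      WB (l * N + n) (K * M + (k * M + m)) = V l k * conj (WPA (N - 1 - n) (M - 1 - m)) :=
    fun l hl k hk n hn m hm => by rw [← add_assoc, hB2 l hl k hk n hn m hm]
  have hFA : arrayFactor2 (L * N) (2 * K * M) WA ψy ψz = P * A - Q * c * conj B := by
    rw [mul_assoc, two_mul, arrayFactor2_add_right, arrayFactor2_kronecker hA1,
      arrayFactor2_kronecker (W := fun r c => WA r (K * M + c)) hA2', arrayFactor2_neg,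
      arrayFactor2_conj_reverse]
    ring
  have hFB : arrayFactor2 (L * N) (2 * K * M) WB ψy ψz = P * B + Q * c * conj A := by
    rw [mul_assoc, two_mul, arrayFactor2_add_right, arrayFactor2_kronecker hB1,
      arrayFactor2_kronecker (W := fun r c => WB r (K * M + c)) hB2',
      arrayFactor2_conj_reverse]
    ring
  rw [hFA, hFB, norm_mul_sub_add_norm_mul_add, norm_mul, hc, mul_one,
    hGolay.norm_sq_add_norm_sq hL hK hU hV]

/-- Proposition 4, horizontal variant: expanding a two-dimensional protoarray by a
Golay complementary array pair of expanders, appending horizontally, yields an array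
whose sum power pattern is `2LK` times that of the protoarray. -/
theorem ura_expansion_horizontal (L K N M : ℕ)
    (hL : 1 ≤ L) (hK : 1 ≤ K) (hN : 1 ≤ N) (hM : 1 ≤ M)
    (U V WPA WPB WA WB : ℕ → ℕ → ℂ)
    (hU : ∀ l < L, ∀ k < K, ‖U l k‖ = 1)
    (hV : ∀ l < L, ∀ k < K, ‖V l k‖ = 1)
    (hGolay : IsGolayArrayPair L K U V)
    (hA1 : ∀ l < L, ∀ k < K, ∀ n < N, ∀ m < M,
      WA (l * N + n) (k * M + m) = U l k * WPA n m)
    (hA2 : ∀ l < L, ∀ k < K, ∀ n < N, ∀ m < M,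
      WA (l * N + n) (K * M + k * M + m) =
        -(V l k * (starRingEnd ℂ) (WPB (N - 1 - n) (M - 1 - m))))
    (hB1 : ∀ l < L, ∀ k < K, ∀ n < N, ∀ m < M,
      WB (l * N + n) (k * M + m) = U l k * WPB n m)
    (hB2 : ∀ l < L, ∀ k < K, ∀ n < N, ∀ m < M,
      WB (l * N + n) (K * M + k * M + m) =
        V l k * (starRingEnd ℂ) (WPA (N - 1 - n) (M - 1 - m)))
    (ψy ψz : ℝ) :
    ‖arrayFactor2 (L * N) (2 * K * M) WA ψy ψz‖ ^ 2 +
        ‖arrayFactor2 (L * N) (2 * K * M) WB ψy ψz‖ ^ 2 =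
      2 * L * K * (‖arrayFactor2 N M WPA ψy ψz‖ ^ 2 +
                    ‖arrayFactor2 N M WPB ψy ψz‖ ^ 2) :=
  ura_expansion_horizontal_general L K N M hL hK U V WPA WPB WA WB hU hV hGolay hA1 hA2 hB1 hB2 ψy
    ψz
end
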